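/- Let G be a simple graph with no ds-completable card, and let v be a vertex of unique degree (no other vertex has degree d_v). Let α_v = {w : d_w = d_v − 1} and β_v = {w : d_w = d_v + 1}. Then v is not adjacent to all vertices of (D − v) ∖ α_v (where D is the set of dull vertices), and v is adjacent to at least one vertex of (B − v) ∖ β_v (where B is the set of bad vertices), provided those sets describe the obstruction structure as in Mulla's criterion. -/

import Mathlib

open SimpleGraph Finset
open scoped Classical

variable {V : Type*}

/-- The degree of a vertex `u` in a simple graph `G`. -/
noncomputable def deg (G : SimpleGraph V) (u : V) : ℕ := (G.neighborSet u).ncard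

/-- The degree of `u` in the card `G − v` (the vertex-deleted subgraph at `v`). -/
noncomputable def cardDeg (G : SimpleGraph V) (v u : V) : ℕ := (G.neighborSet u \ {v}).ncard

/-- The card `G − v` is ds-completable: for each degree `d`, the vertices of degree `d`
in `G − v` are either all neighbours of `v` in `G` or all non-neighbours of `v` in `G`. -/
def DsCompletable (G : SimpleGraph V) (v : V) : Prop :=
  ∀ d : ℕ, (∀ u, u ≠ v → cardDeg G v u = d → G.Adj v u) ∨
           (∀ u, u ≠ v → cardDeg G v u = d → ¬ G.Adj v u)

/-- A vertex is bad if the graph contains a vertex of degree one less. -/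
def Bad (G : SimpleGraph V) (v : V) : Prop := ∃ w, deg G w + 1 = deg G v

/-- A vertex is dull if the graph contains a vertex of degree one more. -/
def Dull (G : SimpleGraph V) (v : V) : Prop := ∃ w, deg G w = deg G v + 1

/-- ε(s,t): the number of stubs on `s` used by edges from `s` to `t`
(for disjoint `s`, `t` this is the number of edges between them; for `s = t`
it is twice the number of edges inside `s`). -/
noncomputable def stubs (G : SimpleGraph V) (s t : Finset V) : ℕ :=
  ((s ×ˢ t).filter fun p => G.Adj p.1 p.2).card

/-- A vertex set is neighbourly if no vertex outside the set has a degree one less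
than that of a vertex in the set. -/
def Neighbourly (G : SimpleGraph V) (K : Finset V) : Prop :=
  ∀ u ∉ K, ∀ w ∈ K, deg G u + 1 ≠ deg G w

/-- A vertex set is `d`-neighbourly if it contains a vertex `v` of degree `d` such that
no vertex outside the set has a degree one less than that of any member other than `v`. -/
def DNeighbourly (G : SimpleGraph V) (d : ℕ) (K : Finset V) : Prop :=
  ∃ v ∈ K, deg G v = d ∧ ∀ u ∉ K, ∀ w ∈ K, w ≠ v → deg G u + 1 ≠ deg G w

theorem cardDeg_add_one_of_adj [Finite V] (G : SimpleGraph V) {v u : V} (hadj : G.Adj v u) :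
    cardDeg G v u + 1 = deg G u :=
  Set.ncard_sdiff_singleton_add_one hadj.symm (Set.toFinite _)

theorem cardDeg_of_not_adj (G : SimpleGraph V) {v u : V} (hadj : ¬ G.Adj v u) :
    cardDeg G v u = deg G u := by
  rw [cardDeg, deg, Set.sdiff_singleton_eq_self fun hv => hadj hv.symm]

/-- The easy direction of Mulla's criterion. -/
theorem exists_adj_not_adj_of_not_dsCompletable [Finite V] (G : SimpleGraph V) {v : V}
    (hv : ¬ DsCompletable G v) :
    ∃ a b, a ≠ v ∧ b ≠ v ∧ G.Adj v a ∧ ¬ G.Adj v b ∧ deg G a = deg G b + 1 := by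
  simp only [DsCompletable, not_forall, not_or, exists_prop, not_not] at hv
  obtain ⟨d, ⟨b, hbv, hbd, hb⟩, ⟨a, hav, had, ha⟩⟩ := hv
  refine ⟨a, b, hav, hbv, ha, hb, ?_⟩
  rw [← cardDeg_add_one_of_adj G ha, ← cardDeg_of_not_adj G hb, had, hbd]

/-- In a graph with no ds-completable card, a vertex `v` of unique degree is not adjacent to
all of `(D − v) ∖ α_v` and is adjacent to some vertex of `(B − v) ∖ β_v`. -/
theorem stmt14 [Fintype V] (G : SimpleGraph V)
    (h : ∀ u : V, ¬ DsCompletable G u) (v : V)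
    (huniq : ∀ u : V, deg G u = deg G v → u = v) :
    (¬ ∀ u ∈ ((univ.filter fun u => Dull G u).erase v) \
        (univ.filter fun u => deg G u + 1 = deg G v), G.Adj v u) ∧
    (∃ u ∈ ((univ.filter fun u => Bad G u).erase v) \
        (univ.filter fun u => deg G u = deg G v + 1), G.Adj v u) := by
  obtain ⟨a, b, hav, hbv, ha, hb, hab⟩ := exists_adj_not_adj_of_not_dsCompletable G (h v)
  simp only [mem_sdiff, mem_erase, mem_filter, mem_univ, true_and]
  constructor
  · intro hall
    refine hb (hall b ⟨⟨hbv, a, hab⟩, fun hbα => hav (huniq a ?_)⟩)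
    omega
  · refine ⟨a, ⟨⟨hav, b, hab.symm⟩, fun haβ => hbv (huniq b ?_)⟩, ha⟩
    omega
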